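/- arXiv:1905.04891 — 2 statements merged into one kernel-verified Lean document; each statement's English description precedes it below -/
import Mathlib

section
/- Let n ≥ 1, 0 < α < n, and let Ω ⊂ ℝⁿ be a bounded measurable set of diameter T₀ > 0. Then there exists a constant C depending only on n and α such that for every integrable f : ℝⁿ → [0, ∞) vanishing outside Ω, ∫_Ω M_α f(y) dy ≤ C · T₀^α · ∫_Ω f(y) dy. -/
/-!
Since `ρ ^ (α - n) ≤ |x - y| ^ (α - n)` on `B_ρ(x)` when `α ≤ n`, every average in the definition
of `M_α f (x)` is bounded by `|B_1|⁻¹ ∫ |x - y| ^ (α - n) f(y) dy`. Integrating over `Ω` and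
swapping the integrals, each `y ∈ Ω` contributes `f(y) ∫_{B̄(y, T₀)} |x - y| ^ (α - n) dx`,
which polar coordinates evaluate to `(n / α) |B_1| T₀ ^ α`; so `C = n / α` works.
-/

open MeasureTheory Metric ENNReal

/-- The fractional maximal function `M_α f (x) = sup_{ρ>0} ρ^α ⨍_{B_ρ(x)} f`. -/
noncomputable def fracMax {n : ℕ} (α : ℝ)
    (f : EuclideanSpace ℝ (Fin n) → ℝ≥0∞) (x : EuclideanSpace ℝ (Fin n)) : ℝ≥0∞ :=
  ⨆ (ρ : ℝ) (_ : 0 < ρ), ENNReal.ofReal (ρ ^ α) * ⨍⁻ y in ball x ρ, f y ∂volume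

open Module Set

theorem ENNReal.rpow_le_rpow_of_nonpos {x y : ℝ≥0∞} {z : ℝ} (hxy : x ≤ y) (hz : z ≤ 0) :
    y ^ z ≤ x ^ z := by
  rw [← neg_neg z, ENNReal.rpow_neg y, ENNReal.rpow_neg x]
  exact ENNReal.inv_le_inv.mpr (ENNReal.rpow_le_rpow hxy (neg_nonneg.mpr hz))

section RieszPotential

variable {E : Type*} [NormedAddCommGroup E] [NormedSpace ℝ E] [FiniteDimensional ℝ E]
  [MeasurableSpace E] [BorelSpace E] (μ : Measure E) [μ.IsAddHaarMeasure]

/-- The Riesz potential, without its normalising constant. -/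
noncomputable def rieszPotential (α : ℝ) (g : E → ℝ≥0∞) (x : E) : ℝ≥0∞ :=
  ∫⁻ y, edist x y ^ (α - finrank ℝ E) * g y ∂μ

theorem integral_closedBall_norm_rpow [Nontrivial E] {α : ℝ} (hα : 0 < α) {R : ℝ} (hR : 0 ≤ R) :
    ∫ x in closedBall (0 : E) R, ‖x‖ ^ (α - finrank ℝ E) ∂μ =
      finrank ℝ E / α * R ^ α * μ.real (ball 0 1) := by
  have hd : 0 < finrank ℝ E := finrank_pos
  have hradial : ∫ r in Ioi (0 : ℝ), r ^ (finrank ℝ E - 1) •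
      (Iic R).indicator (fun r => r ^ (α - finrank ℝ E)) r = R ^ α / α := by
    have hpow : ∀ r ∈ Ioi (0 : ℝ), r ^ (finrank ℝ E - 1) •
        (Iic R).indicator (fun r => r ^ (α - finrank ℝ E)) r =
          (Iic R).indicator (fun r => r ^ (α - 1)) r := by
      intro r (hr : 0 < r)
      by_cases hrR : r ≤ R
      · simp only [indicator_of_mem (mem_Iic.2 hrR), smul_eq_mul]
        rw [← Real.rpow_natCast, ← Real.rpow_add hr, Nat.cast_sub hd, Nat.cast_one]
        ring_nf
      · simp [indicator_of_notMem (show r ∉ Iic R from hrR)]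
    rw [setIntegral_congr_fun measurableSet_Ioi hpow, setIntegral_indicator measurableSet_Iic,
      Ioi_inter_Iic, ← intervalIntegral.integral_of_le hR, integral_rpow (Or.inl (by linarith))]
    simp [hα.ne']
  have hradial_indicator : (closedBall (0 : E) R).indicator (fun x => ‖x‖ ^ (α - finrank ℝ E)) =
      fun x => (Iic R).indicator (fun r => r ^ (α - finrank ℝ E)) ‖x‖ := by
    ext x; simp [indicator]
  rw [← integral_indicator measurableSet_closedBall, hradial_indicator,
    integral_fun_norm_addHaar, hradial, nsmul_eq_mul, smul_eq_mul]
  field_simp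

theorem lintegral_closedBall_edist_rpow [Nontrivial E] {α : ℝ} (hα : 0 < α) {R : ℝ} (hR : 0 ≤ R)
    (y : E) :
    ∫⁻ x in closedBall y R, edist x y ^ (α - finrank ℝ E) ∂μ =
      ENNReal.ofReal (finrank ℝ E / α * R ^ α) * μ (ball 0 1) := by
  have htranslate : ∫⁻ x in closedBall y R, edist x y ^ (α - finrank ℝ E) ∂μ =
      ∫⁻ x in closedBall 0 R, ‖x‖ₑ ^ (α - finrank ℝ E) ∂μ := by
    have h := (measurePreserving_sub_right μ y).setLIntegral_comp_preimage_emb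
      (measurableEmbedding_subRight y) (fun x => ‖x‖ₑ ^ (α - finrank ℝ E)) (closedBall 0 R)
    have hpre : (fun x => x - y) ⁻¹' closedBall (0 : E) R = closedBall y R := by
      ext x; simp [dist_eq_norm]
    simpa only [hpre, edist_eq_enorm_sub] using h
  have hint : IntegrableOn (fun x : E => ‖x‖ ^ (α - finrank ℝ E)) (closedBall 0 R) μ := by
    refine (integrableOn_ball_of_norm_le_rpow (C := 1) (α := finrank ℝ E - α) (r := R + 1)
      finrank_pos (by linarith) (ae_of_all _ fun x => ?_)
      (measurable_norm.pow_const _).aestronglyMeasurable).mono_set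
      (closedBall_subset_ball (by linarith))
    rw [Real.norm_of_nonneg (by positivity), one_mul, neg_sub]
  -- Only `x = 0` is excluded: for `α < d` the extended power is `∞` there, the real one `0`.
  have hofReal : ∀ᵐ x ∂μ.restrict (closedBall 0 R),
      ‖x‖ₑ ^ (α - finrank ℝ E) = ENNReal.ofReal (‖x‖ ^ (α - finrank ℝ E)) := by
    filter_upwards [ae_restrict_of_ae (Measure.ae_ne μ 0)] with x hx
    rw [← ofReal_norm, ENNReal.ofReal_rpow_of_pos (norm_pos_iff.2 hx)]
  rw [htranslate, lintegral_congr_ae hofReal, ← ofReal_integral_eq_lintegral_ofReal hint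
    (ae_of_all _ fun x => by positivity), integral_closedBall_norm_rpow μ hα hR,
    ENNReal.ofReal_mul (by positivity), ofReal_measureReal measure_ball_lt_top.ne]

theorem setLIntegral_rieszPotential_le [Nontrivial E] {α : ℝ} (hα : 0 < α) {Ω : Set E}
    (hΩ : MeasurableSet Ω) (hbdd : Bornology.IsBounded Ω) {g : E → ℝ≥0∞} (hg : AEMeasurable g μ)
    (hsupp : Function.support g ⊆ Ω) :
    ∫⁻ x in Ω, rieszPotential μ α g x ∂μ ≤
      ENNReal.ofReal (finrank ℝ E / α * diam Ω ^ α) * μ (ball 0 1) * ∫⁻ y in Ω, g y ∂μ := by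
  set K : E → E → ℝ≥0∞ := fun x y => edist x y ^ (α - finrank ℝ E)
  have hK : Measurable (Function.uncurry K) :=
    (ENNReal.continuous_rpow_const.comp continuous_edist).measurable
  have hrestrict : ∀ x, rieszPotential μ α g x = ∫⁻ y in Ω, K x y * g y ∂μ := fun x =>
    (setLIntegral_eq_of_support_subset
      ((Function.support_mul_subset_right _ _).trans hsupp)).symm
  calc ∫⁻ x in Ω, rieszPotential μ α g x ∂μ
      = ∫⁻ y in Ω, (∫⁻ x in Ω, K x y ∂μ) * g y ∂μ := by
        simp_rw [hrestrict]
        rw [lintegral_lintegral_swap (hK.aemeasurable.mul hg.restrict.comp_snd)]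
        exact lintegral_congr fun y => lintegral_mul_const _ (hK.comp measurable_prodMk_right)
    _ ≤ ∫⁻ y in Ω, ENNReal.ofReal (finrank ℝ E / α * diam Ω ^ α) * μ (ball 0 1) * g y ∂μ := by
        refine setLIntegral_mono' hΩ fun y hy => mul_le_mul_left ?_ _
        rw [← lintegral_closedBall_edist_rpow μ hα diam_nonneg y]
        exact lintegral_mono_set fun x hx => mem_closedBall.2 (dist_le_diam_of_mem hbdd hx hy)
    _ = _ := lintegral_const_mul' _ _ (mul_ne_top ofReal_ne_top measure_ball_lt_top.ne)

end RieszPotential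

theorem fracMax_le_rieszPotential {n : ℕ} {α : ℝ} (hαn : α ≤ n)
    (g : EuclideanSpace ℝ (Fin n) → ℝ≥0∞) (x : EuclideanSpace ℝ (Fin n)) :
    fracMax α g x ≤ (volume (ball (0 : EuclideanSpace ℝ (Fin n)) 1))⁻¹ *
      rieszPotential volume α g x := by
  refine iSup₂_le fun ρ hρ => ?_
  set v := volume (ball (0 : EuclideanSpace ℝ (Fin n)) 1)
  have hρ0 : ENNReal.ofReal ρ ≠ 0 := (ofReal_pos.2 hρ).ne'
  have hscale : ENNReal.ofReal (ρ ^ α) / volume (ball x ρ) = v⁻¹ * ENNReal.ofReal ρ ^ (α - n) := by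
    rw [Measure.addHaar_ball_of_pos _ x hρ, finrank_euclideanSpace_fin, ofReal_pow hρ.le,
      ← ofReal_rpow_of_pos hρ, rpow_sub _ _ hρ0 ofReal_ne_top, rpow_natCast, div_eq_mul_inv,
      div_eq_mul_inv, ENNReal.mul_inv (Or.inl (pow_ne_zero _ hρ0))
        (Or.inl (pow_ne_top ofReal_ne_top))]
    ring
  have hkernel : ∀ y ∈ ball x ρ, ENNReal.ofReal ρ ^ (α - n) ≤ edist x y ^ (α - n) := fun y hy =>
    ENNReal.rpow_le_rpow_of_nonpos (edist_lt_ofReal.2 (mem_ball'.1 hy)).le (by linarith)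
  calc ENNReal.ofReal (ρ ^ α) * ⨍⁻ y in ball x ρ, g y ∂volume
      = v⁻¹ * ∫⁻ y in ball x ρ, ENNReal.ofReal ρ ^ (α - n) * g y ∂volume := by
        rw [setLAverage_eq, lintegral_const_mul' _ _ (rpow_ne_top_of_nonneg' (pos_iff_ne_zero.2 hρ0)
          ofReal_ne_top), ← mul_assoc, ← hscale, div_eq_mul_inv, div_eq_mul_inv]
        ring
    _ ≤ v⁻¹ * ∫⁻ y in ball x ρ, edist x y ^ (α - n) * g y ∂volume :=
        mul_le_mul_right (setLIntegral_mono' measurableSet_ball fun y hy =>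
          mul_le_mul_left (hkernel y hy) _) _
    _ ≤ v⁻¹ * rieszPotential volume α g x := by
        rw [rieszPotential, finrank_euclideanSpace_fin]
        exact mul_le_mul_right (setLIntegral_le_lintegral _ _) _

theorem stmt10_general (n : ℕ) (α : ℝ) (hα0 : 0 < α) (hαn : α < n) :
    ∃ C : ℝ, 0 < C ∧
      ∀ (Ω : Set (EuclideanSpace ℝ (Fin n))), MeasurableSet Ω → Bornology.IsBounded Ω →
        ∀ T₀ : ℝ, 0 < T₀ → Metric.diam Ω = T₀ →
          ∀ f : EuclideanSpace ℝ (Fin n) → ℝ, Integrable f volume →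
            (∀ y, 0 ≤ f y) → (∀ y ∉ Ω, f y = 0) →
            ∫⁻ y in Ω, fracMax α (fun z => ENNReal.ofReal (f z)) y ∂volume ≤
              ENNReal.ofReal (C * T₀ ^ α) * ∫⁻ y in Ω, ENNReal.ofReal (f y) ∂volume := by
  have hn : 0 < (n : ℝ) := hα0.trans hαn
  have : Nontrivial (EuclideanSpace ℝ (Fin n)) := Module.nontrivial_of_finrank_pos (R := ℝ)
    (by rw [finrank_euclideanSpace_fin]; exact_mod_cast hn)
  refine ⟨n / α, div_pos hn hα0, fun Ω hΩ hbdd T₀ _ hdiam f hf _ hfΩ => ?_⟩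
  set g : EuclideanSpace ℝ (Fin n) → ℝ≥0∞ := fun z => ENNReal.ofReal (f z)
  set v := volume (ball (0 : EuclideanSpace ℝ (Fin n)) 1)
  have hsupp : Function.support g ⊆ Ω := fun y hy =>
    by_contra fun hyΩ => hy (by simp [g, hfΩ y hyΩ])
  have hpotential := setLIntegral_rieszPotential_le volume hα0 hΩ hbdd
    hf.aemeasurable.ennreal_ofReal hsupp
  rw [finrank_euclideanSpace_fin, hdiam] at hpotential
  calc ∫⁻ y in Ω, fracMax α g y ∂volume
      ≤ ∫⁻ y in Ω, v⁻¹ * rieszPotential volume α g y ∂volume :=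
        lintegral_mono fun y => fracMax_le_rieszPotential hαn.le g y
    _ = v⁻¹ * ∫⁻ y in Ω, rieszPotential volume α g y ∂volume :=
        lintegral_const_mul' _ _ (inv_ne_top.2 (measure_ball_pos _ _ one_pos).ne')
    _ ≤ v⁻¹ * (ENNReal.ofReal (n / α * T₀ ^ α) * v * ∫⁻ y in Ω, g y ∂volume) :=
        mul_le_mul_right hpotential _
    _ = ENNReal.ofReal (n / α * T₀ ^ α) * ∫⁻ y in Ω, g y ∂volume := by
        rw [mul_right_comm _ v, mul_comm v⁻¹, mul_assoc _ v, ENNReal.mul_inv_cancel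
          (measure_ball_pos _ _ one_pos).ne' measure_ball_lt_top.ne, mul_one]

/-- for a bounded measurable `Ω` of diameter `T₀ > 0` and any nonnegative
integrable `f` vanishing outside `Ω`, `∫_Ω M_α f ≤ C T₀^α ∫_Ω f` with `C = C(n, α)`. -/
theorem stmt10 (n : ℕ) (hn : 1 ≤ n) (α : ℝ) (hα0 : 0 < α) (hαn : α < n) :
    ∃ C : ℝ, 0 < C ∧
      ∀ (Ω : Set (EuclideanSpace ℝ (Fin n))), MeasurableSet Ω → Bornology.IsBounded Ω →
        ∀ T₀ : ℝ, 0 < T₀ → Metric.diam Ω = T₀ →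
          ∀ f : EuclideanSpace ℝ (Fin n) → ℝ, Integrable f volume →
            (∀ y, 0 ≤ f y) → (∀ y ∉ Ω, f y = 0) →
            ∫⁻ y in Ω, fracMax α (fun z => ENNReal.ofReal (f z)) y ∂volume ≤
              ENNReal.ofReal (C * T₀ ^ α) * ∫⁻ y in Ω, ENNReal.ofReal (f y) ∂volume :=
  stmt10_general n α hα0 hαn
end

section
/- Let n ≥ 1, let g : ℝⁿ → [0, ∞) be locally integrable, let x ∈ ℝⁿ, r > 0, and let y, z ∈ B_r(x). Then M g(y) ≤ max{ M(χ_{B_{2r}(x)} g)(y), 3ⁿ · M g(z) }. -/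
/- Small balls around `y` lie in `B_{2r}(x)`, where the truncation does not change `g`; a ball
`B_ρ(y)` with `ρ > r` lies in `B_{3ρ}(z)`, whose volume is `3ⁿ` times larger. -/

open MeasureTheory Metric ENNReal

section Averages

variable {α : Type*} [MeasurableSpace α] {μ : Measure α} {s t : Set α} {f : α → ℝ≥0∞}

lemma setLAverage_indicator_of_subset (ht : MeasurableSet t) (hts : t ⊆ s) :
    ⨍⁻ y in t, s.indicator f y ∂μ = ⨍⁻ y in t, f y ∂μ := by
  rw [setLAverage_eq, setLAverage_eq,
    setLIntegral_congr_fun ht fun y hy => Set.indicator_of_mem (hts hy) f]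

lemma setLAverage_le_mul_of_subset (hst : s ⊆ t) {k : ℝ≥0∞} (hk0 : k ≠ 0) (hk : k ≠ ∞)
    (hμ : μ t = k * μ s) :
    ⨍⁻ y in s, f y ∂μ ≤ k * ⨍⁻ y in t, f y ∂μ := by
  rw [setLAverage_eq, setLAverage_eq, hμ, ← mul_div_assoc, ENNReal.mul_div_mul_left _ _ hk0 hk]
  exact ENNReal.div_le_div_right (lintegral_mono_set hst) _

end Averages

lemma setLAverage_ball_le_of_subset {E : Type*} [NormedAddCommGroup E] [NormedSpace ℝ E]
    [MeasurableSpace E] [BorelSpace E] [FiniteDimensional ℝ E] (μ : Measure E)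
    [μ.IsAddHaarMeasure] {y z : E} {ρ c : ℝ} (hc : 0 < c) (hsub : ball y ρ ⊆ ball z (c * ρ))
    (f : E → ℝ≥0∞) :
    ⨍⁻ t in ball y ρ, f t ∂μ ≤
      ENNReal.ofReal (c ^ Module.finrank ℝ E) * ⨍⁻ t in ball z (c * ρ), f t ∂μ := by
  refine setLAverage_le_mul_of_subset hsub (by simpa using pow_pos hc _) ofReal_ne_top ?_
  rw [Measure.addHaar_ball_mul_of_pos μ z hc, Measure.addHaar_ball_center μ y]

section FracMax

variable {n : ℕ} {f : EuclideanSpace ℝ (Fin n) → ℝ≥0∞} {x : EuclideanSpace ℝ (Fin n)}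

lemma fracMax_zero_eq :
    fracMax 0 f x = ⨆ (ρ : ℝ) (_ : 0 < ρ), ⨍⁻ y in ball x ρ, f y ∂volume := by
  simp only [fracMax, Real.rpow_zero, ENNReal.ofReal_one, one_mul]

lemma setLAverage_ball_le_fracMax_zero {ρ : ℝ} (hρ : 0 < ρ) :
    ⨍⁻ y in ball x ρ, f y ∂volume ≤ fracMax 0 f x :=
  fracMax_zero_eq (f := f) ▸
    le_iSup₂ (f := fun ρ (_ : 0 < ρ) => ⨍⁻ y in ball x ρ, f y ∂volume) ρ hρ

end FracMax

theorem stmt11_general (n : ℕ)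
    (g : EuclideanSpace ℝ (Fin n) → ℝ)
    (x : EuclideanSpace ℝ (Fin n)) (r : ℝ)
    (y z : EuclideanSpace ℝ (Fin n)) (hy : y ∈ ball x r) (hz : z ∈ ball x r) :
    fracMax 0 (fun t => ENNReal.ofReal (g t)) y ≤
      max (fracMax 0 ((ball x (2 * r)).indicator fun t => ENNReal.ofReal (g t)) y)
        ((3 : ℝ≥0∞) ^ n * fracMax 0 (fun t => ENNReal.ofReal (g t)) z) := by
  rw [fracMax_zero_eq]
  refine iSup₂_le fun ρ hρ => ?_
  have hyx := mem_ball.1 hy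
  rcases le_or_gt ρ r with hρr | hρr
  · have hsub : ball y ρ ⊆ ball x (2 * r) := ball_subset_ball' (by linarith)
    rw [← setLAverage_indicator_of_subset measurableSet_ball hsub]
    exact le_max_of_le_left (setLAverage_ball_le_fracMax_zero hρ)
  · have hyz : dist y z < 2 * r := by
      linarith [dist_triangle_right y z x, mem_ball.1 hz]
    have hsub : ball y ρ ⊆ ball z (3 * ρ) := ball_subset_ball' (by linarith)
    refine le_max_of_le_right ((setLAverage_ball_le_of_subset volume three_pos hsub _).trans ?_)
    rw [finrank_euclideanSpace_fin, ofReal_pow zero_le_three, ofReal_ofNat]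
    gcongr
    exact setLAverage_ball_le_fracMax_zero (by positivity)

/-- for nonnegative locally integrable `g` and `y, z ∈ B_r(x)`,
`M g(y) ≤ max( M(χ_{B_{2r}(x)} g)(y), 3ⁿ M g(z) )`. -/
theorem stmt11 (n : ℕ) (hn : 1 ≤ n)
    (g : EuclideanSpace ℝ (Fin n) → ℝ) (hg : LocallyIntegrable g volume)
    (hg0 : ∀ t, 0 ≤ g t)
    (x : EuclideanSpace ℝ (Fin n)) (r : ℝ) (hr : 0 < r)
    (y z : EuclideanSpace ℝ (Fin n)) (hy : y ∈ ball x r) (hz : z ∈ ball x r) :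
    fracMax 0 (fun t => ENNReal.ofReal (g t)) y ≤
      max (fracMax 0 ((ball x (2 * r)).indicator fun t => ENNReal.ofReal (g t)) y)
        ((3 : ℝ≥0∞) ^ n * fracMax 0 (fun t => ENNReal.ofReal (g t)) z) :=
  stmt11_general n g x r y z hy hz
end
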